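/- Weighted fractional Poincaré inequality on the periodic cube: Let d ≥ 1, λ ∈ (0,1), Q = (0,2π)^d, and c_ρ > 0. Then for every measurable ρ : Q → ℝ with ρ ≥ c_ρ a.e. and every f ∈ L²(Q;ℝ^d), ∫_Q |f(x) − f̄|² dx ≤ ((2π√d)^{d+2λ} / (2(2π)^d c_ρ²)) ∫_Q ∫_Q ρ(x)ρ(y) |f(x) − f(y)|² κ_λ(x−y) dx dy, where f̄ = (2π)^{−d} ∫_Q f(x) dx and κ_λ(z) = Σ_{n∈ℤ^d} |z − 2πn|^{−(d+2λ)}. -/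

import Mathlib

/-
Expanding ‖u - v‖² = ‖u‖² - 2⟪u, v⟫ + ‖v‖² and integrating in both variables, the cross term
vanishes for a function of mean zero, so ∫∫ |f(x) - f(y)|² = 2|Q| ∫ |f - f̄|². On Q × Q the weight
ρ(x)ρ(y) is at least c_ρ², and already the n = 0 term of κ_λ(x - y) is at least
(diam Q)^{-(d+2λ)} = (2π√d)^{-(d+2λ)}, so the weighted double integral dominates
c_ρ² (2π√d)^{-(d+2λ)} · 2(2π)^d ∫ |f - f̄|².
-/

open MeasureTheory Real

noncomputable section

/-- The lattice point `2πn ∈ ℝ^d`, as an element of Euclidean space. -/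
def latt (d : ℕ) (n : Fin d → ℤ) : EuclideanSpace ℝ (Fin d) :=
  WithLp.toLp 2 (fun i => 2 * π * (n i : ℝ))

/-- The singular periodic kernel `κ_λ(z) = Σ_{n∈ℤ^d} |z−2πn|^{−(d+2λ)}`, valued in `[0,∞]`. -/
def kappaE (d : ℕ) (lam : ℝ) (z : EuclideanSpace ℝ (Fin d)) : ENNReal :=
  ∑' n : Fin d → ℤ, ENNReal.ofReal (‖z - latt d n‖ ^ (-((d : ℝ) + 2 * lam)))

/-- The open cube `Q = (0,2π)^d`. -/
def cubeO (d : ℕ) : Set (EuclideanSpace ℝ (Fin d)) :=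
  {x | ∀ i, x i ∈ Set.Ioo (0 : ℝ) (2 * π)}

open scoped ENNReal

section Variance

variable {α E : Type*} [MeasurableSpace α] {μ : Measure α} [IsFiniteMeasure μ]
  [NormedAddCommGroup E] [InnerProductSpace ℝ E] [CompleteSpace E]

theorem integral_norm_sub_sq_of_integral_eq_zero {g : α → E} (hg : MemLp g 2 μ)
    (hg0 : ∫ y, g y ∂μ = 0) (z : E) :
    ∫ y, ‖z - g y‖ ^ 2 ∂μ = μ.real Set.univ * ‖z‖ ^ 2 + ∫ y, ‖g y‖ ^ 2 ∂μ := by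
  have hgi : Integrable g μ := hg.integrable one_le_two
  have hinner : Integrable (fun y => 2 * inner ℝ z (g y)) μ := (hgi.const_inner z).const_mul 2
  have hlin : Integrable (fun y => ‖z‖ ^ 2 - 2 * inner ℝ z (g y)) μ :=
    (integrable_const _).sub hinner
  simp_rw [norm_sub_sq_real]
  rw [integral_add hlin hg.integrable_norm_pow',
    integral_sub (integrable_const _) hinner, integral_const, integral_const_mul,
    integral_inner hgi, hg0, inner_zero_right, smul_eq_mul]
  ring

theorem lintegral_lintegral_ofReal_norm_sub_sq {f : α → E} (hf : MemLp f 2 μ) :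
    ∫⁻ x, ∫⁻ y, ENNReal.ofReal (‖f x - f y‖ ^ 2) ∂μ ∂μ
      = 2 * μ Set.univ * ∫⁻ x, ‖f x - ⨍ y, f y ∂μ‖ₑ ^ 2 ∂μ := by
  set g := fun x => f x - ⨍ y, f y ∂μ
  have hg : MemLp g 2 μ := hf.sub (memLp_const _)
  have hgsq : Integrable (fun x => ‖g x‖ ^ 2) μ := hg.integrable_norm_pow'
  set A := ∫ x, ‖g x‖ ^ 2 ∂μ
  have hA : ∫⁻ x, ‖g x‖ₑ ^ 2 ∂μ = ENNReal.ofReal A := by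
    rw [ofReal_integral_eq_lintegral_ofReal hgsq (ae_of_all _ fun _ => sq_nonneg _)]
    simp_rw [ENNReal.ofReal_pow (norm_nonneg _), ofReal_norm]
  have hinner (x : α) : ∫⁻ y, ENNReal.ofReal (‖f x - f y‖ ^ 2) ∂μ
      = ENNReal.ofReal (μ.real Set.univ * ‖g x‖ ^ 2 + A) := by
    have hx : Integrable (fun y => ‖g x - g y‖ ^ 2) μ :=
      ((memLp_const (g x)).sub hg).integrable_norm_pow'
    rw [← integral_norm_sub_sq_of_integral_eq_zero hg (integral_sub_average μ f),
      ofReal_integral_eq_lintegral_ofReal hx (ae_of_all _ fun _ => sq_nonneg _)]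
    simp only [g, sub_sub_sub_cancel_right]
  have hsum : Integrable (fun x => μ.real Set.univ * ‖g x‖ ^ 2 + A) μ :=
    (hgsq.const_mul _).add (integrable_const _)
  simp_rw [hinner]
  rw [← ofReal_integral_eq_lintegral_ofReal hsum (ae_of_all _ fun _ => by positivity),
    integral_add (hgsq.const_mul _) (integrable_const _), integral_const_mul, integral_const,
    smul_eq_mul, hA, ← ofReal_measureReal, ← ENNReal.ofReal_ofNat 2,
    ← ENNReal.ofReal_mul zero_le_two, ← ENNReal.ofReal_mul (by positivity)]
  congr 1
  ring

end Variance

theorem cubeO_eq_preimage (d : ℕ) :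
    cubeO d = (MeasurableEquiv.toLp 2 (Fin d → ℝ)).symm ⁻¹'
      Set.univ.pi fun _ => Set.Ioo 0 (2 * π) := by
  ext x
  simp [cubeO, Set.mem_pi]

theorem measurableSet_cubeO (d : ℕ) : MeasurableSet (cubeO d) := by
  rw [cubeO_eq_preimage]
  exact (MeasurableEquiv.toLp 2 (Fin d → ℝ)).symm.measurable
    (MeasurableSet.univ_pi fun _ => measurableSet_Ioo)

theorem volume_cubeO (d : ℕ) : volume (cubeO d) = ENNReal.ofReal ((2 * π) ^ d) := by
  rw [cubeO_eq_preimage,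
    (EuclideanSpace.volume_preserving_symm_measurableEquiv_toLp (Fin d)).measure_preimage_equiv,
    volume_pi_pi, Finset.prod_const, Finset.card_univ, Fintype.card_fin, Real.volume_Ioo,
    sub_zero, ENNReal.ofReal_pow two_pi_pos.le]

theorem norm_sub_le_of_mem_cubeO {d : ℕ} {x y : EuclideanSpace ℝ (Fin d)} (hx : x ∈ cubeO d)
    (hy : y ∈ cubeO d) : ‖x - y‖ ≤ 2 * π * √d := by
  have hcoord (i : Fin d) : ‖(x - y) i‖ ^ 2 ≤ (2 * π) ^ 2 := by
    obtain ⟨hx0, hx1⟩ := hx i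
    obtain ⟨hy0, hy1⟩ := hy i
    rw [PiLp.sub_apply, Real.norm_eq_abs, sq_abs]
    nlinarith
  calc ‖x - y‖ = √(∑ i, ‖(x - y) i‖ ^ 2) := EuclideanSpace.norm_eq _
    _ ≤ √(∑ _i : Fin d, (2 * π) ^ 2) := Real.sqrt_le_sqrt (Finset.sum_le_sum fun i _ => hcoord i)
    _ = 2 * π * √d := by
      rw [Finset.sum_const, Finset.card_univ, Fintype.card_fin, nsmul_eq_mul, mul_comm,
        Real.sqrt_mul (by positivity), Real.sqrt_sq two_pi_pos.le]

theorem ofReal_norm_rpow_neg_le_kappaE (d : ℕ) (lam : ℝ) (z : EuclideanSpace ℝ (Fin d)) :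
    ENNReal.ofReal (‖z‖ ^ (-((d : ℝ) + 2 * lam))) ≤ kappaE d lam z := by
  have hzero : latt d 0 = 0 := by
    ext i
    simp [latt]
  unfold kappaE
  simpa [hzero] using ENNReal.le_tsum (f := fun n : Fin d → ℤ =>
    ENNReal.ofReal (‖z - latt d n‖ ^ (-((d : ℝ) + 2 * lam)))) 0

theorem ofReal_diam_cubeO_rpow_neg_le_kappaE {d : ℕ} {lam : ℝ} (hs : 0 ≤ (d : ℝ) + 2 * lam)
    {x y : EuclideanSpace ℝ (Fin d)} (hx : x ∈ cubeO d) (hy : y ∈ cubeO d) (hxy : x ≠ y) :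
    ENNReal.ofReal ((2 * π * √d) ^ (-((d : ℝ) + 2 * lam))) ≤ kappaE d lam (x - y) :=
  le_trans (ENNReal.ofReal_le_ofReal <|
      Real.rpow_le_rpow_of_nonpos (norm_pos_iff.mpr (sub_ne_zero.mpr hxy))
        (norm_sub_le_of_mem_cubeO hx hy) (neg_nonpos.mpr hs))
    (ofReal_norm_rpow_neg_le_kappaE d lam (x - y))

theorem ofReal_mul_lintegral_lintegral_le_weighted {α E : Type*} [MeasurableSpace α]
    {μ : Measure α} [SeminormedAddCommGroup E] {f : α → E} {ρ : α → ℝ}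
    {K : α → α → ℝ≥0∞} {c k : ℝ} (hc : 0 ≤ c) (hρ : ∀ᵐ x ∂μ, c ≤ ρ x)
    (hK : ∀ᵐ x ∂μ, ∀ᵐ y ∂μ, x ≠ y → ENNReal.ofReal k ≤ K x y) :
    ENNReal.ofReal (c ^ 2 * k) * ∫⁻ x, ∫⁻ y, ENNReal.ofReal (‖f x - f y‖ ^ 2) ∂μ ∂μ
      ≤ ∫⁻ x, ∫⁻ y, ENNReal.ofReal (ρ x * ρ y * ‖f x - f y‖ ^ 2) * K x y ∂μ ∂μ := by
  rw [← lintegral_const_mul' _ _ ENNReal.ofReal_ne_top]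
  refine lintegral_mono_ae ?_
  filter_upwards [hρ, hK] with x hρx hKx
  rw [← lintegral_const_mul' _ _ ENNReal.ofReal_ne_top]
  refine lintegral_mono_ae ?_
  filter_upwards [hρ, hKx] with y hρy hKxy
  rcases eq_or_ne x y with rfl | hxy
  · simp
  have hweight : c ^ 2 * ‖f x - f y‖ ^ 2 ≤ ρ x * ρ y * ‖f x - f y‖ ^ 2 := by
    gcongr
    nlinarith
  calc ENNReal.ofReal (c ^ 2 * k) * ENNReal.ofReal (‖f x - f y‖ ^ 2)
      = ENNReal.ofReal (c ^ 2 * ‖f x - f y‖ ^ 2) * ENNReal.ofReal k := by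
        rw [← ENNReal.ofReal_mul' (by positivity), ← ENNReal.ofReal_mul (by positivity)]
        ring_nf
    _ ≤ ENNReal.ofReal (ρ x * ρ y * ‖f x - f y‖ ^ 2) * K x y :=
        mul_le_mul' (ENNReal.ofReal_le_ofReal hweight) (hKxy hxy)

theorem weighted_fractional_poincare_general
    (d : ℕ) (hd : 1 ≤ d) (lam : ℝ) (hlam : lam ∈ Set.Ioo (0 : ℝ) 1)
    (crho : ℝ) (hcrho : 0 < crho)
    (ρ : EuclideanSpace ℝ (Fin d) → ℝ)
    (hρ : ∀ᵐ x ∂(volume.restrict (cubeO d)), crho ≤ ρ x)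
    (f : EuclideanSpace ℝ (Fin d) → EuclideanSpace ℝ (Fin d))
    (hf : MemLp f 2 (volume.restrict (cubeO d))) :
    ∫⁻ x in cubeO d,
        (‖f x - ((2 * π) ^ d : ℝ)⁻¹ • (∫ y in cubeO d, f y)‖₊ : ENNReal) ^ 2
      ≤ ENNReal.ofReal
          ((2 * π * Real.sqrt d) ^ ((d : ℝ) + 2 * lam) / (2 * (2 * π) ^ d * crho ^ 2)) *
        ∫⁻ x in cubeO d, ∫⁻ y in cubeO d,
          ENNReal.ofReal (ρ x * ρ y * ‖f x - f y‖ ^ 2) * kappaE d lam (x - y) := by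
  set μ := volume.restrict (cubeO d)
  set D := 2 * π * √d
  set s := (d : ℝ) + 2 * lam
  have hμ : μ Set.univ = ENNReal.ofReal ((2 * π) ^ d) := by
    rw [Measure.restrict_apply_univ, volume_cubeO]
  have : IsFiniteMeasure μ := ⟨by simp [hμ]⟩
  have hmean : ⨍ y, f y ∂μ = ((2 * π) ^ d : ℝ)⁻¹ • ∫ y in cubeO d, f y := by
    rw [average_eq, measureReal_def, hμ, ENNReal.toReal_ofReal (by positivity)]
  have hs : 0 ≤ s := by positivity [hlam.1]
  have hD : 0 < D := by positivity
  have hK : ∀ᵐ x ∂μ, ∀ᵐ y ∂μ, x ≠ y → ENNReal.ofReal (D ^ (-s)) ≤ kappaE d lam (x - y) := by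
    filter_upwards [ae_restrict_mem (measurableSet_cubeO d)] with x hx
    filter_upwards [ae_restrict_mem (measurableSet_cubeO d)] with y hy
    exact ofReal_diam_cubeO_rpow_neg_le_kappaE hs hx hy
  have hconst : ENNReal.ofReal (D ^ s / (2 * (2 * π) ^ d * crho ^ 2)) *
      (ENNReal.ofReal (crho ^ 2 * D ^ (-s)) * (2 * ENNReal.ofReal ((2 * π) ^ d))) = 1 := by
    rw [← ENNReal.ofReal_ofNat 2, ← ENNReal.ofReal_mul zero_le_two,
      ← ENNReal.ofReal_mul (by positivity), ← ENNReal.ofReal_mul (by positivity),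
      ENNReal.ofReal_eq_one, Real.rpow_neg hD.le]
    field_simp
  have hlower := ofReal_mul_lintegral_lintegral_le_weighted (f := f) hcrho.le hρ hK
  rw [lintegral_lintegral_ofReal_norm_sub_sq hf, hμ, hmean] at hlower
  simp only [← enorm_eq_nnnorm]
  calc _ = ENNReal.ofReal (D ^ s / (2 * (2 * π) ^ d * crho ^ 2)) *
        (ENNReal.ofReal (crho ^ 2 * D ^ (-s)) * (2 * ENNReal.ofReal ((2 * π) ^ d) *
          ∫⁻ x in cubeO d, ‖f x - ((2 * π) ^ d : ℝ)⁻¹ • ∫ y in cubeO d, f y‖ₑ ^ 2)) := by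
        rw [← mul_assoc _ (2 * _), ← mul_assoc, hconst, one_mul]
    _ ≤ _ := by gcongr

/-- Weighted fractional Poincaré inequality on the periodic cube. If
`ρ ≥ c_ρ > 0` a.e. on `Q = (0,2π)^d` and `f ∈ L²(Q;ℝ^d)`, then with `f̄ = (2π)^{−d}∫_Q f`,
`∫_Q |f − f̄|² ≤ ((2π√d)^{d+2λ}/(2(2π)^d c_ρ²)) ∫_Q∫_Q ρ(x)ρ(y)|f(x)−f(y)|² κ_λ(x−y) dx dy`. -/
theorem weighted_fractional_poincare
    (d : ℕ) (hd : 1 ≤ d) (lam : ℝ) (hlam : lam ∈ Set.Ioo (0 : ℝ) 1)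
    (crho : ℝ) (hcrho : 0 < crho)
    (ρ : EuclideanSpace ℝ (Fin d) → ℝ) (hρm : Measurable ρ)
    (hρ : ∀ᵐ x ∂(volume.restrict (cubeO d)), crho ≤ ρ x)
    (f : EuclideanSpace ℝ (Fin d) → EuclideanSpace ℝ (Fin d))
    (hf : MemLp f 2 (volume.restrict (cubeO d))) :
    ∫⁻ x in cubeO d,
        (‖f x - ((2 * π) ^ d : ℝ)⁻¹ • (∫ y in cubeO d, f y)‖₊ : ENNReal) ^ 2
      ≤ ENNReal.ofReal
          ((2 * π * Real.sqrt d) ^ ((d : ℝ) + 2 * lam) / (2 * (2 * π) ^ d * crho ^ 2)) *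
        ∫⁻ x in cubeO d, ∫⁻ y in cubeO d,
          ENNReal.ofReal (ρ x * ρ y * ‖f x - f y‖ ^ 2) * kappaE d lam (x - y) :=
  weighted_fractional_poincare_general d hd lam hlam crho hcrho ρ hρ f hf
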